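/- Fix real numbers θ_0 with 1/2 < θ_0 < 691/1318 and c_1 with 0 ≤ c_1 < 8×10^{-6}. For a natural number m set k_0 := m^2·e^{4m/(θ_0(1−c_1)) + 8}, A := log(2k_0) − 2·log log(2k_0), T := (e^A − 1)/A, and γ := (1/A)·(1 − 1/(1 + A·T)). Then log k_0 − 2·log γ − ( 4·log m + 4m/(θ_0(1−c_1)) + 8 + 2·log(4/(θ_0(1−c_1))) ) → 0 as m → ∞. -/

import Mathlib

open Filter

/-- `k₀(m) = m² e^{4m/(θ₀(1-c₁)) + 8}` (as a real number). -/
noncomputable def paperK0 (θ0 c1 : ℝ) (m : ℕ) : ℝ :=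
  (m : ℝ) ^ 2 * Real.exp (4 * m / (θ0 * (1 - c1)) + 8)

/-- `A = log (2k₀) - 2 log log (2k₀)` (here `x` plays the role of `k₀`). -/
noncomputable def paperA' (x : ℝ) : ℝ := Real.log (2 * x) - 2 * Real.log (Real.log (2 * x))

/-- `T = (e^A - 1)/A`. -/
noncomputable def paperT' (x : ℝ) : ℝ := (Real.exp (paperA' x) - 1) / paperA' x

/-- `γ = (1/A)(1 - 1/(1 + A T))`. -/
noncomputable def paperGamma' (x : ℝ) : ℝ :=
  (1 / paperA' x) * (1 - 1 / (1 + paperA' x * paperT' x))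

/-! Since `1 + A T = e^A`, one has `γ = (1 - e^{-A}) / A`, hence
`log k₀ - 2 log γ = log k₀ + 2 log A - 2 log (1 - e^{-A})`. With `c = 4/(θ₀(1-c₁)) > 0`,
`log k₀ = 2 log m + c m + 8` and `A ~ log k₀ ~ c m → ∞`, because `log (2x) - 2 log log (2x) ~ log x`.
So `log (1 - e^{-A}) → 0` and `log A = log (c m) + log (A / (c m)) = log c + log m + o(1)`. -/

open Asymptotics Real Topology

lemma isEquivalent_sub_const_mul_log (a : ℝ) : (fun x : ℝ => x - a * log x) ~[atTop] id :=
  IsEquivalent.refl.sub_isLittleO (isLittleO_log_id_atTop.const_mul_left a)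

lemma isEquivalent_log_const_mul {a : ℝ} (ha : a ≠ 0) :
    (fun x : ℝ => log (a * x)) ~[atTop] log := by
  refine (IsEquivalent.refl.const_add_of_norm_tendsto_atTop (c := log a)
    (tendsto_norm_atTop_atTop.comp tendsto_log_atTop)).congr_left ?_
  filter_upwards [eventually_ne_atTop 0] with x hx
  rw [log_mul ha hx]

lemma tendsto_log_one_sub_exp_neg : Tendsto (fun x : ℝ => log (1 - exp (-x))) atTop (𝓝 0) := by
  have h : Tendsto (fun x : ℝ => 1 - exp (-x)) atTop (𝓝 1) := by
    simpa using tendsto_const_nhds.sub tendsto_exp_neg_atTop_nhds_zero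
  simpa [Function.comp_def] using (continuousAt_log one_ne_zero).tendsto.comp h

lemma tendsto_log_div_of_isEquivalent {α : Type*} {l : Filter α} {u v : α → ℝ}
    (huv : u ~[l] v) (hv : ∀ᶠ x in l, v x ≠ 0) : Tendsto (fun x => log (u x / v x)) l (𝓝 0) := by
  simpa [Function.comp_def] using (continuousAt_log one_ne_zero).tendsto.comp
    ((isEquivalent_iff_tendsto_one hv).1 huv)

lemma paperA'_isEquivalent_log : paperA' ~[atTop] log :=
  ((isEquivalent_sub_const_mul_log 2).comp_tendsto
    (tendsto_log_atTop.comp (tendsto_id.const_mul_atTop two_pos))).trans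
    (isEquivalent_log_const_mul two_ne_zero)

lemma log_paperGamma' {x : ℝ} (hA : 0 < paperA' x) :
    log (paperGamma' x) = log (1 - exp (-paperA' x)) - log (paperA' x) := by
  have hγ : paperGamma' x = (1 - exp (-paperA' x)) / paperA' x := by
    rw [paperGamma', paperT', mul_div_cancel₀ _ hA.ne', add_sub_cancel, exp_neg]
    ring
  have h1 : 0 < 1 - exp (-paperA' x) := sub_pos.2 (exp_lt_one_iff.2 (neg_lt_zero.2 hA))
  rw [hγ, log_div h1.ne' hA.ne']

lemma log_paperK0 (θ0 c1 : ℝ) {m : ℕ} (hm : m ≠ 0) :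
    log (paperK0 θ0 c1 m) = 2 * log m + (4 * m / (θ0 * (1 - c1)) + 8) := by
  rw [paperK0, log_mul (by positivity) (exp_ne_zero _), log_pow, log_exp]
  push_cast
  ring

lemma isEquivalent_log_paperK0 {θ0 c1 : ℝ} (hc : 4 / (θ0 * (1 - c1)) ≠ 0) :
    (fun m : ℕ => log (paperK0 θ0 c1 m)) ~[atTop] fun m => 4 / (θ0 * (1 - c1)) * m := by
  have hlog : (fun m : ℕ => 2 * log m + 8) =o[atTop] fun m : ℕ => (m : ℝ) :=
    ((isLittleO_log_id_atTop.comp_tendsto tendsto_natCast_atTop_atTop).const_mul_left 2).add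
      (isLittleO_const_left.2 (.inr (tendsto_norm_atTop_atTop.comp tendsto_natCast_atTop_atTop)))
  refine (IsEquivalent.refl.add_isLittleO (hlog.const_mul_right hc)).congr_left ?_
  filter_upwards [eventually_ne_atTop 0] with m hm
  rw [log_paperK0 θ0 c1 hm, Pi.add_apply]
  ring

lemma tendsto_paperK0_atTop {θ0 c1 : ℝ} (hc : 0 < 4 / (θ0 * (1 - c1))) :
    Tendsto (paperK0 θ0 c1) atTop atTop := by
  have hexp : Tendsto (fun m : ℕ => exp (4 * m / (θ0 * (1 - c1)) + 8)) atTop atTop := by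
    refine tendsto_exp_atTop.comp (tendsto_atTop_add_const_right _ _ ?_)
    simpa [mul_div_right_comm] using tendsto_natCast_atTop_atTop.const_mul_atTop hc
  refine tendsto_atTop_mono' _ ?_ hexp
  filter_upwards [eventually_ge_atTop 1] with m hm
  exact le_mul_of_one_le_left (exp_pos _).le (one_le_pow₀ (by exact_mod_cast hm))

theorem logk0_sub_twoLogGamma_asymptotic_general (θ0 c1 : ℝ)
    (hθ1 : 1 / 2 < θ0)
    (hc2 : c1 < 8e-6) :
    Tendsto (fun m : ℕ =>
        Real.log (paperK0 θ0 c1 m) - 2 * Real.log (paperGamma' (paperK0 θ0 c1 m)) -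
          (4 * Real.log m + 4 * m / (θ0 * (1 - c1)) + 8 +
            2 * Real.log (4 / (θ0 * (1 - c1)))))
      atTop (nhds 0) := by
  have hc : 0 < 4 / (θ0 * (1 - c1)) := by
    have : 0 < θ0 * (1 - c1) := mul_pos (by linarith) (by norm_num at hc2 ⊢; linarith)
    positivity
  set c := 4 / (θ0 * (1 - c1))
  have hA : (fun m : ℕ => paperA' (paperK0 θ0 c1 m)) ~[atTop] fun m => c * m :=
    (paperA'_isEquivalent_log.comp_tendsto (tendsto_paperK0_atTop hc)).trans
      (isEquivalent_log_paperK0 hc.ne')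
  have hcm : ∀ᶠ m : ℕ in atTop, c * m ≠ 0 := by
    filter_upwards [eventually_ne_atTop 0] with m hm using by positivity
  have hAtop := hA.symm.tendsto_atTop (tendsto_natCast_atTop_atTop.const_mul_atTop hc)
  have hlim := ((tendsto_log_div_of_isEquivalent hA hcm).const_mul 2).sub
    ((tendsto_log_one_sub_exp_neg.comp hAtop).const_mul 2)
  rw [mul_zero, sub_zero] at hlim
  refine hlim.congr' ?_
  filter_upwards [eventually_ne_atTop 0, hAtop.eventually_gt_atTop 0] with m hm hApos
  have hm' : (0 : ℝ) < m := by positivity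
  rw [Function.comp_apply, log_paperK0 θ0 c1 hm, log_paperGamma' hApos,
    log_div hApos.ne' (by positivity), log_mul hc.ne' hm'.ne']
  ring

/-- With `k₀ = m² e^{4m/(θ₀(1-c₁))+8}`, one has
`log k₀ - 2 log γ = 4 log m + 4m/(θ₀(1-c₁)) + 8 + 2 log (4/(θ₀(1-c₁))) + o(1)` as `m → ∞`. -/
theorem logk0_sub_twoLogGamma_asymptotic (θ0 c1 : ℝ)
    (hθ1 : 1 / 2 < θ0) (hθ2 : θ0 < 691 / 1318)
    (hc1 : 0 ≤ c1) (hc2 : c1 < 8e-6) :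
    Tendsto (fun m : ℕ =>
        Real.log (paperK0 θ0 c1 m) - 2 * Real.log (paperGamma' (paperK0 θ0 c1 m)) -
          (4 * Real.log m + 4 * m / (θ0 * (1 - c1)) + 8 +
            2 * Real.log (4 / (θ0 * (1 - c1)))))
      atTop (nhds 0) :=
  logk0_sub_twoLogGamma_asymptotic_general θ0 c1 hθ1 hc2
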